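/- arXiv:1006.1480 — 2 statements merged into one kernel-verified Lean document; each statement's English description precedes it below -/
import Mathlib

section
/- Let (K_i)_{i∈ℤ} be an increasing filtration of an abelian group with ∩_i K_i = 0 and torsion-free associated graded group, let p ≥ 2 be an integer and d ≥ 0. Suppose given elements u_k ∈ K_{d-k(p-1)} for k = 0, ..., d and an element u_{-1} ∈ K = ∪_i K_i such that Σ_{k=-1}^{d} p^{d-k}·u_k = 0 in K (equivalently Σ_{k=-1}^{d} p^{-k} ⊗ u_k = 0 in ℤ[1/p] ⊗ K, using that K is torsion-free). Then for every k = 0, ..., d, we have u_k ∈ K_{d-k(p-1)-1} + p·K_{d-k(p-1)}. -/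
/-- Proposition (cor:injl): if `u_k ∈ K_{d-k(p-1)}` for `k = 0, …, d`, `u_{-1} ∈ K`
(denoted `w` below, receiving coefficient `p^{d+1}`), and
`Σ_{k=-1}^{d} p^{d-k} • u_k = 0`, then each `u_k` has image zero in
`ℤ/p ⊗ gr_{d-k(p-1)} K`, i.e. `u_k ∈ K_{d-k(p-1)-1} + p • K_{d-k(p-1)}`. -/
theorem stmt1 {A : Type*} [AddCommGroup A] (K : ℤ → AddSubgroup A)
    (hmono : ∀ i : ℤ, K i ≤ K (i + 1))
    (hinter : ∀ a : A, (∀ i : ℤ, a ∈ K i) → a = 0)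
    (hgr : ∀ (n m : ℤ) (x : A), m ≠ 0 → x ∈ K n → m • x ∈ K (n - 1) → x ∈ K (n - 1))
    (p : ℤ) (hp : 2 ≤ p) (d : ℕ)
    (u : ℕ → A) (w : A)
    (hu : ∀ k ≤ d, u k ∈ K ((d : ℤ) - (k : ℤ) * (p - 1)))
    (hw : ∃ i : ℤ, w ∈ K i)
    (hsum : p ^ (d + 1) • w + ∑ k ∈ Finset.range (d + 1), p ^ (d - k) • u k = 0) :
    ∀ k ≤ d, ∃ a b : A, a ∈ K ((d : ℤ) - (k : ℤ) * (p - 1) - 1) ∧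
      b ∈ K ((d : ℤ) - (k : ℤ) * (p - 1)) ∧ u k = a + p • b := by
  have hp0 : p ≠ 0 := by omega
  -- monotonicity of the filtration
  have hmono' : ∀ n m : ℤ, n ≤ m → K n ≤ K m := fun n =>
    Int.le_induction le_rfl (fun i _ ih => le_trans ih (hmono i))
  -- descent: if p • x ∈ K n and x ∈ K i for some i, then x ∈ K n
  have hdesc : ∀ x : A, (∃ i : ℤ, x ∈ K i) → ∀ n : ℤ, p • x ∈ K n → x ∈ K n := by
    rintro x ⟨i, hi⟩ n hpx
    rcases le_or_gt i n with h | h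
    · exact hmono' i n h hi
    · have key : ∀ c : ℕ, x ∈ K (n + c) → x ∈ K n := by
        intro c
        induction c with
        | zero => simpa using id
        | succ c ih =>
          intro hx
          apply ih
          have hx' : x ∈ K (n + c + 1) := by
            have e : (n : ℤ) + ((c : ℕ) + 1 : ℕ) = n + c + 1 := by push_cast; ring
            rwa [e] at hx
          have h2 : p • x ∈ K (n + c + 1 - 1) := by
            rw [add_sub_cancel_right]
            exact hmono' n (n + c) (by simp) hpx
          have := hgr (n + c + 1) p x hp0 hx' h2
          rwa [add_sub_cancel_right] at this
      have hic : x ∈ K (n + ((i - n).toNat : ℤ)) := by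
        refine hmono' i _ ?_ hi
        omega
      exact key _ hic
  -- the main "division by p" step
  have hstep : ∀ j : ℕ, j ≤ d → ∀ r : A, r ∈ K ((d : ℤ) - (j : ℤ) * (p - 1) - 1) →
      p ^ (j + 1) • w + (∑ i ∈ Finset.range (j + 1), p ^ (j - i) • u i) + r = 0 →
      (p ^ j • w + ∑ i ∈ Finset.range j, p ^ (j - 1 - i) • u i)
        ∈ K ((d : ℤ) - (j : ℤ) * (p - 1)) ∧
      ∃ a b : A, a ∈ K ((d : ℤ) - (j : ℤ) * (p - 1) - 1) ∧
        b ∈ K ((d : ℤ) - (j : ℤ) * (p - 1)) ∧ u j = a + p • b := by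
    intro j hj r hr hrel
    set t : A := p ^ j • w + ∑ i ∈ Finset.range j, p ^ (j - 1 - i) • u i with ht
    have hpt : p • t + (u j + r) = 0 := by
      have e1 : p ^ (j + 1) • w = p • (p ^ j • w) := by
        rw [smul_smul, ← pow_succ']
      have e2 : ∑ i ∈ Finset.range (j + 1), p ^ (j - i) • u i
          = p • (∑ i ∈ Finset.range j, p ^ (j - 1 - i) • u i) + u j := by
        rw [Finset.sum_range_succ, Finset.smul_sum]
        congr 1
        · apply Finset.sum_congr rfl
          intro i hi
          rw [smul_smul, ← pow_succ']
          congr 2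
          have := Finset.mem_range.mp hi
          omega
        · simp
      rw [e1, e2] at hrel
      rw [ht, smul_add, ← hrel]
      abel
    have hrK : r ∈ K ((d : ℤ) - (j : ℤ) * (p - 1)) :=
      hmono' _ _ (by linarith) hr
    have hptK : p • t ∈ K ((d : ℤ) - (j : ℤ) * (p - 1)) := by
      have e : p • t = -(u j + r) := by
        rw [eq_neg_iff_add_eq_zero]; exact hpt
      rw [e]
      exact neg_mem (add_mem (hu j hj) hrK)
    obtain ⟨i0, hwK⟩ := hw
    have hM : t ∈ K (max i0 (d : ℤ)) := by
      refine add_mem (hmono' i0 _ (le_max_left _ _) (AddSubgroup.zsmul_mem _ hwK _)) ?_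
      refine AddSubgroup.sum_mem _ (fun i hi => ?_)
      have hi' : i ≤ d := by have := Finset.mem_range.mp hi; omega
      refine hmono' _ _ ?_ (AddSubgroup.zsmul_mem _ (hu i hi') _)
      have h0 : (0 : ℤ) ≤ (i : ℤ) * (p - 1) := mul_nonneg (by positivity) (by omega)
      exact le_trans (by linarith) (le_max_right i0 (d : ℤ))
    have htK : t ∈ K ((d : ℤ) - (j : ℤ) * (p - 1)) :=
      hdesc t ⟨_, hM⟩ _ hptK
    refine ⟨htK, -r, -t, neg_mem hr, neg_mem htK, ?_⟩
    have h' : u j + (r + p • t) = 0 := by rw [← hpt]; abel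
    rw [add_eq_zero_iff_eq_neg] at h'
    rw [h', smul_neg]; abel
  -- the downward induction producing the relations
  have hkey : ∀ m : ℕ, m ≤ d →
      ∃ r : A, r ∈ K ((d : ℤ) - ((d - m : ℕ) : ℤ) * (p - 1) - 1) ∧
        p ^ (d - m + 1) • w + (∑ i ∈ Finset.range (d - m + 1), p ^ (d - m - i) • u i) + r = 0 := by
    intro m
    induction m with
    | zero => exact fun _ => ⟨0, zero_mem _, by simpa using hsum⟩
    | succ m ih =>
      intro hm
      obtain ⟨r, hr, hrel⟩ := ih (by omega)
      obtain ⟨htK, _⟩ := hstep (d - m) (by omega) r hr hrel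
      refine ⟨-(p ^ (d - m) • w + ∑ i ∈ Finset.range (d - m), p ^ (d - m - 1 - i) • u i),
        ?_, ?_⟩
      · apply neg_mem
        refine hmono' _ _ ?_ htK
        have hc : ((d - (m + 1) : ℕ) : ℤ) = ((d - m : ℕ) : ℤ) - 1 := by
          push_cast [Nat.cast_sub (by omega : m + 1 ≤ d)]
          omega
        rw [hc]
        have h1 : (1 : ℤ) ≤ p - 1 := by omega
        nlinarith [h1]
      · have e1 : d - (m + 1) + 1 = d - m := by omega
        have e2 : d - (m + 1) = d - m - 1 := by omega
        rw [e1, e2]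
        abel
  intro k hk
  obtain ⟨r, hr, hrel⟩ := hkey (d - k) (by omega)
  have e : d - (d - k) = k := by omega
  rw [e] at hr hrel
  exact (hstep k hk r hr hrel).2
end

section
/- Let p be a prime number, N ≥ 1, and work in R = ℤ[c]/(c^{N+1}) with θ = Σ_{i=0}^{p-1} (1-c)^{-i}. Then in ℤ[1/p] ⊗ R, the inverse θ^{-1} can be written as θ^{-1} = Σ_{k=0}^{⌊N/(p-1)⌋} p^{-1-k} ⊗ e_k with e_k ∈ c^{k(p-1)}·R, and moreover p^{1+⌊N/(p-1)⌋}·θ^{-1} lies in the image of R → ℤ[1/p] ⊗ R. -/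
/-!
Write `(1 - c)⁻¹ = 1 + v` with `v = c (1 - c)⁻¹`. Then `θ = ∑_{j<p} C(p, j+1) v^j`, and since `p`
divides the inner binomial coefficients, `θ = u (p + w)` with `u ≡ 1 mod v` a unit and
`w = u⁻¹ v^(p-1)`. As `c^(N+1) = 0` and `(p - 1)(m + 1) > N` for `m = ⌊N/(p-1)⌋`, `w^(m+1) = 0`,
so `p^(m+1) (p + w)⁻¹ = ∑_{k≤m} p^(m-k) (-w)^k` and `e_k = u⁻¹ (-w)^k` is divisible by
`c^(k(p-1))`.
-/

/-- The truncated polynomial ring `ℤ[c]/(c^(N+1))`. -/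
abbrev BottRing (N : ℕ) : Type :=
  Polynomial ℤ ⧸ Ideal.span {(Polynomial.X : Polynomial ℤ) ^ (N + 1)}

noncomputable def bottC (N : ℕ) : BottRing N :=
  Ideal.Quotient.mk _ Polynomial.X

/-- The Bott class `θ = Σ_{i=0}^{p-1} (1-c)^(-i)` in `ℤ[c]/(c^(N+1))`. -/
noncomputable def bottTheta (p N : ℕ) : BottRing N :=
  ∑ i ∈ Finset.range p, Ring.inverse (1 - bottC N) ^ i

open Finset

theorem geom_sum_add_one_eq_sum_choose {R : Type*} [CommSemiring R] (v : R) (n : ℕ) :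
    ∑ i ∈ range n, (v + 1) ^ i = ∑ j ∈ range n, (n.choose (j + 1) : R) * v ^ j := by
  simpa [Polynomial.eval_finsetSum] using
    congrArg (Polynomial.eval v) (Polynomial.geom_sum_X_comp_X_add_one_eq_sum (R := R) n)

theorem Nat.Prime.exists_geom_sum_add_one_eq {R : Type*} [CommRing R] {p : ℕ} (hp : p.Prime)
    (v : R) : ∃ a : R, ∑ i ∈ range p, (v + 1) ^ i = p * (1 + v * a) + v ^ (p - 1) := by
  obtain ⟨r, rfl⟩ : ∃ r, p = r + 2 := ⟨p - 2, by have := hp.two_le; omega⟩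
  have hdvd : ∀ j ∈ range r, r + 2 ∣ (r + 2).choose (j + 2) := fun j hj =>
    hp.dvd_choose_self (by omega) (by simp at hj; omega)
  refine ⟨∑ j ∈ range r, (((r + 2).choose (j + 2) / (r + 2) : ℕ) : R) * v ^ j, ?_⟩
  rw [geom_sum_add_one_eq_sum_choose, sum_range_succ, sum_range_succ', mul_add, mul_one,
    Finset.mul_sum, Finset.mul_sum]
  have hmiddle : ∀ j ∈ range r, ((r + 2).choose (j + 1 + 1) : R) * v ^ (j + 1) =
      (r + 2 : ℕ) * (v * ((((r + 2).choose (j + 2) / (r + 2) : ℕ) : R) * v ^ j)) := by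
    intro j hj
    rw [show ((r + 2).choose (j + 1 + 1) : R)
        = ((r + 2 : ℕ) * ((r + 2).choose (j + 2) / (r + 2) : ℕ) : ℕ) by
      rw [Nat.mul_div_cancel' (hdvd j hj)]]
    push_cast; ring
  rw [sum_congr rfl hmiddle]
  simp only [Nat.choose_one_right, Nat.choose_self, Nat.add_one_sub_one, zero_add, pow_zero,
    mul_one, Nat.cast_one, one_mul]
  ring

theorem add_mul_sum_pow_mul_neg_pow {R : Type*} [CommRing R] (x : R) {w : R} {m : ℕ}
    (hw : w ^ (m + 1) = 0) :
    (x + w) * ∑ k ∈ range (m + 1), x ^ (m - k) * (-w) ^ k = x ^ (m + 1) := by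
  have h := geom_sum₂_mul (-w) x (m + 1)
  rw [neg_pow, hw, mul_zero, Nat.add_sub_cancel] at h
  rw [sum_congr rfl fun k _ => mul_comm (x ^ (m - k)) ((-w) ^ k)]
  linear_combination -h

theorem exists_geom_sum_inverse_one_sub_mul_sum_eq_pow {R : Type*} [CommRing R] {p N : ℕ}
    (hp : p.Prime) {c : R} (hc : c ^ (N + 1) = 0) :
    ∃ e : ℕ → R, (∀ k, c ^ (k * (p - 1)) ∣ e k) ∧
      (∑ i ∈ range p, Ring.inverse (1 - c) ^ i) *
        ∑ k ∈ range (N / (p - 1) + 1), (p : R) ^ (N / (p - 1) - k) * e k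
        = (p : R) ^ (N / (p - 1) + 1) := by
  set m := N / (p - 1)
  set t := Ring.inverse (1 - c)
  have hc_nil : IsNilpotent c := ⟨N + 1, hc⟩
  have ht : (1 - c) * t = 1 := Ring.mul_inverse_cancel _ hc_nil.isUnit_one_sub
  set v := c * t
  have htv : t = v + 1 := by linear_combination ht
  obtain ⟨a, ha⟩ := hp.exists_geom_sum_add_one_eq v
  have hv_nil : IsNilpotent v := (Commute.all c t).isNilpotent_mul_right hc_nil
  obtain ⟨u, hu⟩ := ((Commute.all v a).isNilpotent_mul_right hv_nil).isUnit_one_add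
  set w := ↑u⁻¹ * v ^ (p - 1) with hw_def
  have htheta : ∑ i ∈ range p, t ^ i = u * (p + w) := by
    rw [mul_add, hw_def, Units.mul_inv_cancel_left, hu, htv, ha, mul_comm]
  have hw : w ^ (m + 1) = 0 := by
    have hN : N + 1 ≤ (p - 1) * (m + 1) := by
      have := Nat.lt_div_mul_add (a := N) (b := p - 1) (by have := hp.two_le; omega)
      rw [mul_add_one, mul_comm]
      exact this
    rw [mul_pow, ← pow_mul, mul_pow, pow_eq_zero_of_le hN hc, zero_mul, mul_zero]
  have hcw : c ^ (p - 1) ∣ -w :=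
    (dvd_neg).mpr (Dvd.dvd.mul_left (pow_dvd_pow_of_dvd (dvd_mul_right c t) _) _)
  refine ⟨fun k => ↑u⁻¹ * (-w) ^ k, fun k => ?_, ?_⟩
  · rw [pow_mul']
    exact (pow_dvd_pow_of_dvd hcw k).mul_left _
  · simp_rw [htheta, mul_left_comm _ (↑u⁻¹ : R), ← Finset.mul_sum]
    rw [mul_mul_mul_comm, Units.mul_inv, one_mul, add_mul_sum_pow_mul_neg_pow _ hw]

theorem bottC_pow_eq_zero (N : ℕ) : bottC N ^ (N + 1) = 0 := by
  rw [bottC, ← map_pow, Ideal.Quotient.eq_zero_iff_mem]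
  exact Ideal.mem_span_singleton_self _

theorem stmt13_general (p N : ℕ) (hp : p.Prime) :
    ∃ e : ℕ → BottRing N,
      (∀ k ≤ N / (p - 1), e k ∈ Ideal.span {bottC N ^ (k * (p - 1))}) ∧
      (algebraMap (BottRing N) (Localization.Away ((p : BottRing N))) (bottTheta p N) *
        (∑ k ∈ Finset.range (N / (p - 1) + 1),
          (p : Localization.Away ((p : BottRing N))) ^ (N / (p - 1) - k) *
            algebraMap (BottRing N) (Localization.Away ((p : BottRing N))) (e k))
        = (p : Localization.Away ((p : BottRing N))) ^ (N / (p - 1) + 1)) ∧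
      ∃ r : BottRing N,
        algebraMap (BottRing N) (Localization.Away ((p : BottRing N))) (bottTheta p N) *
          algebraMap (BottRing N) (Localization.Away ((p : BottRing N))) r
          = (p : Localization.Away ((p : BottRing N))) ^ (N / (p - 1) + 1) := by
  obtain ⟨e, he_dvd, he⟩ :=
    exists_geom_sum_inverse_one_sub_mul_sum_eq_pow hp (bottC_pow_eq_zero N)
  change bottTheta p N * _ = _ at he
  have hloc := congrArg (algebraMap (BottRing N) (Localization.Away (p : BottRing N))) he
  simp only [map_mul, map_pow, map_natCast] at hloc
  refine ⟨e, fun k _ => Ideal.mem_span_singleton.mpr (he_dvd k), ?_, _, hloc⟩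
  simpa only [map_sum, map_mul, map_pow, map_natCast] using hloc

/-- One-variable model of the Bott class decomposition: with `m = ⌊N/(p-1)⌋`,
`θ⁻¹ = Σ_{k=0}^{m} p^(-1-k) ⊗ e_k` in `ℤ[1/p] ⊗ R` (stated after multiplying
through by `p^(m+1)`), where `e_k ∈ c^(k(p-1))·R`; in particular
`p^(1+m)·θ⁻¹` lies in the image of `R → ℤ[1/p] ⊗ R`. -/
theorem stmt13 (p N : ℕ) (hp : p.Prime) (hN : 1 ≤ N) :
    ∃ e : ℕ → BottRing N,
      (∀ k ≤ N / (p - 1), e k ∈ Ideal.span {bottC N ^ (k * (p - 1))}) ∧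
      (algebraMap (BottRing N) (Localization.Away ((p : BottRing N))) (bottTheta p N) *
        (∑ k ∈ Finset.range (N / (p - 1) + 1),
          (p : Localization.Away ((p : BottRing N))) ^ (N / (p - 1) - k) *
            algebraMap (BottRing N) (Localization.Away ((p : BottRing N))) (e k))
        = (p : Localization.Away ((p : BottRing N))) ^ (N / (p - 1) + 1)) ∧
      ∃ r : BottRing N,
        algebraMap (BottRing N) (Localization.Away ((p : BottRing N))) (bottTheta p N) *
          algebraMap (BottRing N) (Localization.Away ((p : BottRing N))) r
          = (p : Localization.Away ((p : BottRing N))) ^ (N / (p - 1) + 1) :=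
  stmt13_general p N hp
end
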